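/- Let 3/4 < p < 1 and set x⁻ = (1 - √(4p-3))/(2p) and x⁺ = (1 + √(4p-3))/(2p). Then for every initial frequency x₀ with x⁻ < x₀ ≤ 1, the sequence of iterates f_p^[n](x₀) converges to x⁺ as n → ∞; that is, any initial infected frequency above the threshold x⁻ drives the Wolbachia infection to the stable equilibrium x⁺. -/
import Mathlib


noncomputable def f (p x : ℝ) : ℝ := p * x / (1 - p * x + (p * x) ^ 2)

lemma fD_pos (p x : ℝ) : 0 < 1 - p * x + (p * x) ^ 2 := by
  nlinarith [sq_nonneg (p * x - 1), sq_nonneg (p * x)]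

lemma f_mono (p : ℝ) (hp0 : 0 < p) (hp1 : p ≤ 1) {x y : ℝ} (hx : 0 ≤ x) (hxy : x ≤ y)
    (hy : y ≤ 1) : f p x ≤ f p y := by
  unfold f
  rw [div_le_div_iff₀ (fD_pos p x) (fD_pos p y)]
  have h1 : 0 ≤ 1 - p^2 * x * y := by
    have hp2 : p^2 ≤ 1 := by nlinarith
    have hxy1 : x*y ≤ 1 := by nlinarith
    have hxy0 : 0 ≤ x*y := mul_nonneg hx (hx.trans hxy)
    nlinarith [mul_le_mul hp2 hxy1 hxy0 zero_le_one]
  nlinarith [mul_nonneg hp0.le (mul_nonneg (sub_nonneg.2 hxy) h1)]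

/-- for 3/4 < p < 1, any initial frequency x₀ with x⁻ < x₀ ≤ 1
drives the iterates to the stable equilibrium x⁺ = (1 + √(4p-3))/(2p). -/
theorem iterates_tendsto_stable_equilibrium (p : ℝ) (hp : 3/4 < p) (hp1 : p < 1)
    (x₀ : ℝ) (hx₀ : (1 - Real.sqrt (4*p - 3)) / (2*p) < x₀) (hx₀' : x₀ ≤ 1) :
    Filter.Tendsto (fun n => (f p)^[n] x₀) Filter.atTop
      (nhds ((1 + Real.sqrt (4*p - 3)) / (2*p))) := by
  have hp0 : (0:ℝ) < p := by linarith
  set s := Real.sqrt (4*p - 3) with hsdef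
  have hs0 : 0 ≤ s := Real.sqrt_nonneg _
  have hs2 : s ^ 2 = 4*p - 3 := Real.sq_sqrt (by linarith)
  have hspos : 0 < s := Real.sqrt_pos.2 (by linarith)
  have hs1 : s < 1 := by nlinarith
  set xm := (1 - s) / (2*p) with hxmdef
  set xp := (1 + s) / (2*p) with hxpdef
  have h2p0 : (0:ℝ) < 2*p := by linarith
  have h2m : 2*p*xm = 1 - s := by rw [hxmdef]; field_simp
  have h2p : 2*p*xp = 1 + s := by rw [hxpdef]; field_simp
  have hxm0 : 0 < xm := div_pos (by linarith) h2p0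
  have hxmp : xm < xp := by rw [hxmdef, hxpdef, div_lt_div_iff₀ h2p0 h2p0]; nlinarith
  have hxp1 : xp ≤ 1 := by
    rw [hxpdef, div_le_one h2p0]
    nlinarith [sq_nonneg (p - 1)]
  -- quadratic sign facts
  have hDlt : ∀ x : ℝ, xm < x → x < xp → 1 - p*x + (p*x)^2 < p := by
    intro x h1 h2
    have e1 : 1 - s < 2*p*x := by
      have := (mul_lt_mul_iff_right₀ h2p0).2 h1
      linarith [h2m ▸ this]
    have e2 : 2*p*x < 1 + s := by
      have := (mul_lt_mul_iff_right₀ h2p0).2 h2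
      linarith [h2p ▸ this]
    nlinarith [mul_pos (show 0 < s - (2*p*x - 1) by linarith) (show 0 < s + (2*p*x - 1) by linarith)]
  have hDgt : ∀ x : ℝ, xp < x → p < 1 - p*x + (p*x)^2 := by
    intro x h1
    have e2 : 1 + s < 2*p*x := by
      have := (mul_lt_mul_iff_right₀ h2p0).2 h1
      linarith [h2p ▸ this]
    nlinarith [mul_pos (show 0 < (2*p*x - 1) - s by linarith) (show 0 < (2*p*x - 1) + s by linarith)]
  have hinc : ∀ x : ℝ, xm < x → x < xp → x < f p x := by
    intro x h1 h2
    have hx0 : 0 < x := lt_trans hxm0 h1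
    rw [f, lt_div_iff₀ (fD_pos p x)]
    have := hDlt x h1 h2
    nlinarith
  have hdec : ∀ x : ℝ, xp < x → f p x < x := by
    intro x h1
    have hx0 : 0 < x := lt_trans (lt_trans hxm0 hxmp) h1
    rw [f, div_lt_iff₀ (fD_pos p x)]
    have := hDgt x h1
    nlinarith
  have hDp : 1 - p*xp + (p*xp)^2 = p := by
    linear_combination ((2*p*xp - (1 - s))/4) * h2p + (1/4) * hs2
  have hfix : f p xp = xp := by
    rw [f, hDp, mul_comm, mul_div_assoc, div_self hp0.ne', mul_one]
  have hcont : Continuous (f p) := by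
    unfold f
    have hc1 : Continuous fun x : ℝ => p * x := continuous_const.mul continuous_id
    exact hc1.div ((continuous_const.sub hc1).add (hc1.pow 2)) fun x => (fD_pos p x).ne'
  set a : ℕ → ℝ := fun n => (f p)^[n] x₀ with hadef
  have ha0 : a 0 = x₀ := rfl
  have hastep : ∀ n, a (n+1) = f p (a n) := fun n => Function.iterate_succ_apply' _ _ _
  rcases le_or_gt x₀ xp with hcase | hcase
  · -- increasing case
    have hbound : ∀ n, xm < a n ∧ a n ≤ xp := by
      intro n
      induction n with
      | zero => exact ⟨hx₀, hcase⟩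
      | succ k ih =>
        obtain ⟨h1, h2⟩ := ih
        constructor
        · rw [hastep]
          rcases lt_or_eq_of_le h2 with h2' | h2'
          · exact lt_trans h1 (hinc _ h1 h2')
          · rw [h2', hfix]; exact hxmp
        · rw [hastep]
          calc f p (a k) ≤ f p xp := f_mono p hp0 hp1.le (le_of_lt (lt_trans hxm0 h1)) h2 hxp1
            _ = xp := hfix
    have hstep : ∀ n, a n ≤ a (n+1) := by
      intro n
      obtain ⟨h1, h2⟩ := hbound n
      rw [hastep]
      rcases lt_or_eq_of_le h2 with h2' | h2'
      · exact le_of_lt (hinc _ h1 h2')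
      · rw [h2', hfix]
    have hmono : Monotone a := monotone_nat_of_le_succ hstep
    have hbdd : BddAbove (Set.range a) := ⟨xp, by rintro _ ⟨n, rfl⟩; exact (hbound n).2⟩
    have hconv : Filter.Tendsto a Filter.atTop (nhds (⨆ n, a n)) :=
      tendsto_atTop_ciSup hmono hbdd
    set L := ⨆ n, a n with hLdef
    have hL1 : L ≤ xp := ciSup_le fun n => (hbound n).2
    have hL0 : xm < L := lt_of_lt_of_le (hbound 0).1 (le_ciSup hbdd 0)
    have h2' : Filter.Tendsto (fun n => a (n+1)) Filter.atTop (nhds L) :=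
      hconv.comp (Filter.tendsto_add_atTop_nat 1)
    have h3 : Filter.Tendsto (fun n => f p (a n)) Filter.atTop (nhds (f p L)) :=
      (hcont.tendsto L).comp hconv
    have heq : (fun n => f p (a n)) = fun n => a (n+1) := funext fun n => (hastep n).symm
    have hfL : f p L = L := tendsto_nhds_unique (heq ▸ h3) h2'
    have hLxp : L = xp := by
      rcases lt_or_eq_of_le hL1 with h | h
      · exact absurd hfL (ne_of_gt (hinc L hL0 h))
      · exact h
    exact hLxp ▸ hconv
  · -- decreasing case
    have hbound : ∀ n, xp ≤ a n ∧ a n ≤ 1 := by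
      intro n
      induction n with
      | zero => exact ⟨hcase.le, hx₀'⟩
      | succ k ih =>
        obtain ⟨h1, h2⟩ := ih
        constructor
        · rw [hastep]
          calc xp = f p xp := hfix.symm
            _ ≤ f p (a k) := f_mono p hp0 hp1.le (le_of_lt (lt_trans hxm0 hxmp)) h1 h2
        · rw [hastep]
          rcases lt_or_eq_of_le h1 with h1' | h1'
          · exact le_trans (hdec _ h1').le h2
          · rw [← h1', hfix]; rw [← h1'] at h2; exact h2
    have hstep : ∀ n, a (n+1) ≤ a n := by
      intro n
      obtain ⟨h1, h2⟩ := hbound n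
      rw [hastep]
      rcases lt_or_eq_of_le h1 with h1' | h1'
      · exact (hdec _ h1').le
      · rw [← h1', hfix]
    have hanti : Antitone a := antitone_nat_of_succ_le hstep
    have hbdd : BddBelow (Set.range a) := ⟨xp, by rintro _ ⟨n, rfl⟩; exact (hbound n).1⟩
    have hconv : Filter.Tendsto a Filter.atTop (nhds (⨅ n, a n)) :=
      tendsto_atTop_ciInf hanti hbdd
    set L := ⨅ n, a n with hLdef
    have hL1 : xp ≤ L := le_ciInf fun n => (hbound n).1
    have h2srv : Filter.Tendsto (fun n => a (n+1)) Filter.atTop (nhds L) :=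
      hconv.comp (Filter.tendsto_add_atTop_nat 1)
    have h3 : Filter.Tendsto (fun n => f p (a n)) Filter.atTop (nhds (f p L)) :=
      (hcont.tendsto L).comp hconv
    have heq : (fun n => f p (a n)) = fun n => a (n+1) := funext fun n => (hastep n).symm
    have hfL : f p L = L := tendsto_nhds_unique (heq ▸ h3) h2srv
    have hLxp : L = xp := by
      rcases lt_or_eq_of_le hL1 with h | h
      · exact absurd hfL (ne_of_lt (hdec L h))
      · exact h.symm
    exact hLxp ▸ hconv
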